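/- Gradient stability of Leon's preconditioner: let m ∈ ℝ^n, η > 0, and let S ⪯ T be positive definite symmetric n×n matrices. Define g_S(m) = η (mm^T + S)^{-1/2} m and g_T(m) = η (mm^T + T)^{-1/2} m. Then ‖g_T(m) − g_S(m)‖²_{T^{1/2}} ≤ η² (tr(√T) − tr(√S)), where ‖x‖²_H = ⟨x, Hx⟩. -/

import Mathlib

open Matrix
open scoped Classical

/-- The positive semidefinite square root of a matrix (zero if not PSD). -/
noncomputable def sqrtM {n : ℕ} (A : Matrix (Fin n) (Fin n) ℝ) : Matrix (Fin n) (Fin n) ℝ :=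
  if h : A.PosSemidef then
    (h.1.eigenvectorUnitary : Matrix (Fin n) (Fin n) ℝ) *
      diagonal ((↑) ∘ Real.sqrt ∘ h.1.eigenvalues) *
      (star (h.1.eigenvectorUnitary : Matrix (Fin n) (Fin n) ℝ))
  else 0

/-- Euclidean norm of a vector. -/
noncomputable def euclNorm {n : ℕ} (v : Fin n → ℝ) : ℝ := Real.sqrt (v ⬝ᵥ v)

/-- The ℓ₂ operator (spectral) norm of a matrix. -/
noncomputable def opNorm {n : ℕ} (A : Matrix (Fin n) (Fin n) ℝ) : ℝ :=
  ⨆ u : {u : Fin n → ℝ // euclNorm u ≤ 1}, euclNorm (A *ᵥ u)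

/-!
Write `F = √(mmᵀ + S)`, `G = √(mmᵀ + T)` and `w = G⁻¹m - F⁻¹m`, so that `g_T - g_S = η w`.
The square root is operator monotone, hence `√T ≤ G` and `F ≤ G`, and it suffices to bound
`⟨w, G w⟩`. Expanding, `⟨w, G w⟩ = ⟨m, (G⁻¹ - F⁻¹) m⟩ + ⟨m, F⁻¹(G - F)F⁻¹ m⟩`: the first term is
`≤ 0` because inversion is antitone, and substituting `mmᵀ = F² - S` turns the second into
`tr G - tr F - tr(F⁻¹(G - F)F⁻¹ S) ≤ tr G - tr F`.

It remains to see that `tr √(A + P) - tr √A` decreases in `A` (for `P ⪰ 0`). The tangent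
inequality `2 tr R ≤ tr(X⁻¹R²) + tr X` traps each increment of `tr √` along `A ↦ A + P/k` between
the values of `tr((√·)⁻¹ P) / 2k` at its two ends, and `(√A)⁻¹` decreases in `A`; telescoping over
the `k` steps leaves an error `O(1/k)`.
-/

open scoped MatrixOrder ComplexOrder

namespace Matrix

variable {ι : Type*} [Fintype ι]

lemma PosSemidef.trace_mul_nonneg {𝕜 : Type*} [RCLike 𝕜] {A B : Matrix ι ι 𝕜}
    (hA : A.PosSemidef) (hB : B.PosSemidef) : 0 ≤ (A * B).trace := by
  obtain ⟨C, rfl⟩ := CStarAlgebra.nonneg_iff_eq_star_mul_self.mp hA.nonneg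
  rw [← trace_mul_cycle, star_eq_conjTranspose]
  exact (hB.mul_mul_conjTranspose_same C).trace_nonneg

lemma IsHermitian.dotProduct_mulVec_comm {A : Matrix ι ι ℝ} (hA : A.IsHermitian) (x y : ι → ℝ) :
    x ⬝ᵥ (A *ᵥ y) = (A *ᵥ x) ⬝ᵥ y := by
  rw [dotProduct_mulVec, ← mulVec_transpose, (isHermitian_iff_isSymm.mp hA).eq]

lemma dotProduct_mulVec_eq_trace_mul_vecMulVec (M : Matrix ι ι ℝ) (x : ι → ℝ) :
    x ⬝ᵥ (M *ᵥ x) = (M * vecMulVec x x).trace := by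
  rw [mul_vecMulVec, trace_vecMulVec, dotProduct_comm]

lemma dotProduct_mulVec_le_of_le {A B : Matrix ι ι ℝ} (hAB : A ≤ B) (x : ι → ℝ) :
    x ⬝ᵥ (A *ᵥ x) ≤ x ⬝ᵥ (B *ᵥ x) := by
  have h := hAB.dotProduct_mulVec_nonneg x
  rw [star_trivial, sub_mulVec, dotProduct_sub] at h
  linarith

variable [DecidableEq ι]

lemma PosDef.two_mul_dotProduct_sub_le {A : Matrix ι ι ℝ} (hA : A.PosDef) (x y : ι → ℝ) :
    2 * (x ⬝ᵥ y) - y ⬝ᵥ (A *ᵥ y) ≤ x ⬝ᵥ (A⁻¹ *ᵥ x) := by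
  have hAA : A *ᵥ (A⁻¹ *ᵥ x) = x := by
    rw [mulVec_mulVec, mul_nonsing_inv _ hA.det_pos.ne'.isUnit, one_mulVec]
  have h := hA.posSemidef.dotProduct_mulVec_nonneg (y - A⁻¹ *ᵥ x)
  rw [star_trivial, mulVec_sub, hAA, sub_dotProduct, dotProduct_sub, dotProduct_sub,
    hA.isHermitian.dotProduct_mulVec_comm (A⁻¹ *ᵥ x), hAA, dotProduct_comm (A⁻¹ *ᵥ x) x,
    dotProduct_comm y x] at h
  linarith

lemma PosDef.inv_anti {A B : Matrix ι ι ℝ} (hA : A.PosDef) (hAB : A ≤ B) : B⁻¹ ≤ A⁻¹ := by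
  have hB : B.PosDef := by simpa using hA.add_posSemidef hAB
  refine .of_dotProduct_mulVec_nonneg (hA.inv.isHermitian.sub hB.inv.isHermitian) fun x => ?_
  have hBB : B *ᵥ (B⁻¹ *ᵥ x) = x := by
    rw [mulVec_mulVec, mul_nonsing_inv _ hB.det_pos.ne'.isUnit, one_mulVec]
  -- With `y = B⁻¹x`: `⟨x, B⁻¹x⟩ = 2⟨x, y⟩ - ⟨y, B y⟩ ≤ 2⟨x, y⟩ - ⟨y, A y⟩ ≤ ⟨x, A⁻¹x⟩`.
  have h := hAB.dotProduct_mulVec_nonneg (B⁻¹ *ᵥ x)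
  have hvar := hA.two_mul_dotProduct_sub_le x (B⁻¹ *ᵥ x)
  rw [star_trivial, sub_mulVec, dotProduct_sub, hBB, dotProduct_comm] at h
  rw [star_trivial, sub_mulVec, dotProduct_sub]
  linarith

lemma PosDef.quadForm_inv_sub_inv_mulVec_le_trace_sub {F G S : Matrix ι ι ℝ} (m : ι → ℝ)
    (hF : F.PosDef) (hFG : F ≤ G) (hS : S.PosSemidef) (hFF : F * F = vecMulVec m m + S) :
    (G⁻¹ *ᵥ m - F⁻¹ *ᵥ m) ⬝ᵥ (G *ᵥ (G⁻¹ *ᵥ m - F⁻¹ *ᵥ m)) ≤ G.trace - F.trace := by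
  have hG : G.PosDef := by simpa using hF.add_posSemidef hFG
  have hFu : IsUnit F.det := hF.det_pos.ne'.isUnit
  have hGu : IsUnit G.det := hG.det_pos.ne'.isUnit
  set D := G⁻¹ - F⁻¹
  set K := F⁻¹ * (G - F) * F⁻¹
  have hDGD : D * G * D = D + K := by
    simp only [D, K, Matrix.sub_mul, Matrix.mul_sub, Matrix.mul_assoc, mul_nonsing_inv _ hGu,
      nonsing_inv_mul_cancel_left _ _ hFu, nonsing_inv_mul_cancel_left _ _ hGu, Matrix.mul_one]
    abel
  have hK : K.PosSemidef := by
    have h := (le_iff.mp hFG).mul_mul_conjTranspose_same F⁻¹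
    rwa [hF.inv.isHermitian.eq] at h
  have hDm : m ⬝ᵥ (D *ᵥ m) ≤ 0 := by
    rw [sub_mulVec, dotProduct_sub, sub_nonpos]
    exact dotProduct_mulVec_le_of_le (hF.inv_anti hFG) m
  have hKm : m ⬝ᵥ (K *ᵥ m) = G.trace - F.trace - (K * S).trace := by
    have hKFF : K * (F * F) = F⁻¹ * (G - F) * F := by
      simp only [K, Matrix.mul_assoc, nonsing_inv_mul_cancel_left _ _ hFu]
    rw [dotProduct_mulVec_eq_trace_mul_vecMulVec, eq_sub_of_add_eq hFF.symm, Matrix.mul_sub,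
      trace_sub, hKFF, trace_mul_cycle, mul_nonsing_inv _ hFu, Matrix.one_mul, trace_sub]
  calc (G⁻¹ *ᵥ m - F⁻¹ *ᵥ m) ⬝ᵥ (G *ᵥ (G⁻¹ *ᵥ m - F⁻¹ *ᵥ m))
      = m ⬝ᵥ ((D * G * D) *ᵥ m) := by
        rw [← sub_mulVec, ← (hG.inv.isHermitian.sub hF.inv.isHermitian).dotProduct_mulVec_comm,
          mulVec_mulVec, mulVec_mulVec]
    _ = m ⬝ᵥ (D *ᵥ m) + m ⬝ᵥ (K *ᵥ m) := by rw [hDGD, add_mulVec, dotProduct_add]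
    _ ≤ G.trace - F.trace := by linarith [hK.trace_mul_nonneg hS]

lemma IsHermitian.two_mul_trace_le {R X : Matrix ι ι ℝ} (hR : R.IsHermitian) (hX : X.PosDef) :
    2 * R.trace ≤ (X⁻¹ * (R * R)).trace + X.trace := by
  have hXu : IsUnit X.det := hX.det_pos.ne'.isUnit
  have h := (hX.inv.posSemidef.mul_mul_conjTranspose_same (R - X)).trace_nonneg
  simp only [(hR.sub hX.isHermitian).eq, Matrix.sub_mul, Matrix.mul_sub, mul_nonsing_inv _ hXu,
    nonsing_inv_mul_cancel_right _ _ hXu, Matrix.one_mul, trace_sub] at h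
  rw [trace_mul_cycle, trace_mul_comm] at h
  linarith

end Matrix

section sqrtM

variable {n : ℕ} {A B M N P Q S : Matrix (Fin n) (Fin n) ℝ}

lemma posSemidef_sqrtM (hA : A.PosSemidef) : (sqrtM A).PosSemidef := by
  rw [sqrtM, dif_pos hA, star_eq_conjTranspose]
  exact (PosSemidef.diagonal fun i => by simp [Real.sqrt_nonneg]).mul_mul_conjTranspose_same _

lemma sqrtM_mul_self (hA : A.PosSemidef) : sqrtM A * sqrtM A = A := by
  rw [sqrtM, dif_pos hA]
  set U : Matrix (Fin n) (Fin n) ℝ := (hA.1.eigenvectorUnitary : Matrix (Fin n) (Fin n) ℝ)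
  have hUU : star U * U = 1 := Unitary.coe_star_mul_self _
  have hDD : diagonal ((↑) ∘ Real.sqrt ∘ hA.1.eigenvalues) *
      diagonal ((↑) ∘ Real.sqrt ∘ hA.1.eigenvalues) = diagonal hA.1.eigenvalues := by
    rw [diagonal_mul_diagonal]
    congr 1
    funext i
    simp [Real.mul_self_sqrt (hA.eigenvalues_nonneg i)]
  conv_rhs => rw [hA.1.spectral_theorem]
  simp only [Matrix.mul_assoc, ← Matrix.mul_assoc (star U) U, hUU, Matrix.one_mul]
  simp [← Matrix.mul_assoc, hDD, U]

lemma posDef_sqrtM (hA : A.PosDef) : (sqrtM A).PosDef :=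
  (posSemidef_sqrtM hA.posSemidef).posDef_iff_isUnit.mpr <|
    isUnit_of_mul_isUnit_left (by rw [sqrtM_mul_self hA.posSemidef]; exact hA.isUnit)

lemma inv_sqrtM_mul_self (hA : A.PosDef) : (sqrtM A)⁻¹ * A = sqrtM A := by
  nth_rw 2 [← sqrtM_mul_self hA.posSemidef]
  exact nonsing_inv_mul_cancel_left _ _ (posDef_sqrtM hA).det_pos.ne'.isUnit

lemma sqrtM_le_sqrtM (hA : A.PosDef) (hAB : A ≤ B) : sqrtM A ≤ sqrtM B := by
  have hB : B.PosDef := by simpa using hA.add_posSemidef hAB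
  set F := sqrtM A
  set G := sqrtM B
  have hF := posDef_sqrtM hA
  have hG := posDef_sqrtM hB
  have hD : (G - F).IsHermitian := hG.isHermitian.sub hF.isHermitian
  -- On an eigenvector `v` of `G - F` with eigenvalue `t`, `B - A = (G - F) G + F (G - F)` gives
  -- `0 ≤ ⟨v, (B - A) v⟩ = t (⟨v, G v⟩ + ⟨v, F v⟩)`, and the bracket is positive.
  refine hD.posSemidef_iff_eigenvalues_nonneg.mpr fun i => ?_
  set v : Fin n → ℝ := ⇑(hD.eigenvectorBasis i)
  set t := hD.eigenvalues i
  have hv : (G - F) *ᵥ v = t • v := hD.mulVec_eigenvectorBasis i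
  have hv0 : v ≠ 0 := fun h =>
    hD.eigenvectorBasis.orthonormal.ne_zero i (by ext j; exact congrFun h j)
  have hBA : B - A = (G - F) * G + F * (G - F) := by
    rw [← sqrtM_mul_self hB.posSemidef, ← sqrtM_mul_self hA.posSemidef]
    noncomm_ring
  have hquad : v ⬝ᵥ ((B - A) *ᵥ v) = t * (v ⬝ᵥ (G *ᵥ v) + v ⬝ᵥ (F *ᵥ v)) := by
    rw [hBA, add_mulVec, dotProduct_add, ← mulVec_mulVec, ← mulVec_mulVec,
      hD.dotProduct_mulVec_comm, hv, mulVec_smul]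
    simp only [smul_dotProduct, dotProduct_smul, smul_eq_mul]
    ring
  have hpos : 0 < v ⬝ᵥ (G *ᵥ v) + v ⬝ᵥ (F *ᵥ v) := by
    simpa [add_mulVec] using (hG.add hF).dotProduct_mulVec_pos hv0
  have hBA_nonneg := hAB.dotProduct_mulVec_nonneg v
  rw [star_trivial, hquad] at hBA_nonneg
  exact (mul_nonneg_iff_of_pos_right hpos).mp hBA_nonneg

lemma trace_inv_sqrtM_mul_anti (hS : S.PosDef) (hSA : S ≤ A) (hP : P.PosSemidef) :
    ((sqrtM A)⁻¹ * P).trace ≤ ((sqrtM S)⁻¹ * P).trace := by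
  have h := (le_iff.mp ((posDef_sqrtM hS).inv_anti (sqrtM_le_sqrtM hS hSA))).trace_mul_nonneg hP
  rw [Matrix.sub_mul, trace_sub] at h
  linarith

lemma two_mul_trace_sqrtM_add_le (hN : N.PosDef) (hQ : Q.PosSemidef) :
    2 * (sqrtM (N + Q)).trace ≤ 2 * (sqrtM N).trace + ((sqrtM N)⁻¹ * Q).trace := by
  have hNQ := hN.posSemidef.add hQ
  have h := (posSemidef_sqrtM hNQ).isHermitian.two_mul_trace_le (posDef_sqrtM hN)
  rw [sqrtM_mul_self hNQ, Matrix.mul_add, trace_add, inv_sqrtM_mul_self hN] at h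
  linarith

lemma le_two_mul_trace_sqrtM_add (hM : M.PosDef) (hQ : Q.PosSemidef) :
    2 * (sqrtM M).trace + ((sqrtM (M + Q))⁻¹ * Q).trace ≤ 2 * (sqrtM (M + Q)).trace := by
  have hMQ : (M + Q).PosDef := hM.add_posSemidef hQ
  have h := (posSemidef_sqrtM hM.posSemidef).isHermitian.two_mul_trace_le (posDef_sqrtM hMQ)
  have hsplit := congrArg trace (inv_sqrtM_mul_self hMQ)
  rw [sqrtM_mul_self hM.posSemidef] at h
  rw [Matrix.mul_add, trace_add] at hsplit
  linarith

lemma trace_sqrtM_gap_step (hM : M.PosDef) (hMN : M ≤ N) (hQ : Q.PosSemidef) :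
    2 * ((sqrtM (N + Q)).trace - (sqrtM (M + Q)).trace) + ((sqrtM (M + Q))⁻¹ * Q).trace ≤
      2 * ((sqrtM N).trace - (sqrtM M).trace) + ((sqrtM M)⁻¹ * Q).trace := by
  have hN : N.PosDef := by simpa using hM.add_posSemidef hMN
  have h1 := two_mul_trace_sqrtM_add_le hN hQ
  have h2 := trace_inv_sqrtM_mul_anti hM hMN hQ
  have h3 := le_two_mul_trace_sqrtM_add hM hQ
  linarith

lemma trace_sqrtM_gap_nsmul_le (hS : S.PosDef) (hSA : S ≤ A) (hQ : Q.PosSemidef) (k : ℕ) :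
    2 * ((sqrtM (A + k • Q)).trace - (sqrtM (S + k • Q)).trace) ≤
      2 * ((sqrtM A).trace - (sqrtM S).trace) + ((sqrtM S)⁻¹ * Q).trace := by
  set e : ℕ → ℝ := fun j => 2 * ((sqrtM (A + j • Q)).trace - (sqrtM (S + j • Q)).trace) +
    ((sqrtM (S + j • Q))⁻¹ * Q).trace
  have hjQ (j : ℕ) : (j • Q).PosSemidef := nonneg_iff_posSemidef.mp (nsmul_nonneg hQ.nonneg j)
  have he : Antitone e := antitone_nat_of_succ_le fun j => by
    simp only [e, succ_nsmul, ← add_assoc]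
    exact trace_sqrtM_gap_step (hS.add_posSemidef (hjQ j)) (add_le_add_left hSA _) hQ
  have hek := he (Nat.zero_le k)
  have hrest := (posDef_sqrtM (hS.add_posSemidef (hjQ k))).inv.posSemidef.trace_mul_nonneg hQ
  simp only [e, zero_nsmul, add_zero] at hek
  linarith

lemma trace_sqrtM_add_sub_le (hS : S.PosDef) (hSA : S ≤ A) (hP : P.PosSemidef) :
    (sqrtM (A + P)).trace - (sqrtM A).trace ≤ (sqrtM (S + P)).trace - (sqrtM S).trace := by
  set c := ((sqrtM S)⁻¹ * P).trace
  have hstep (k : ℕ) (hk : 0 < k) : (sqrtM (A + P)).trace - (sqrtM (S + P)).trace ≤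
      (sqrtM A).trace - (sqrtM S).trace + c / 2 / k := by
    have hk' : (k : ℝ) ≠ 0 := by positivity
    have h := trace_sqrtM_gap_nsmul_le hS hSA (hP.smul (by positivity : (0 : ℝ) ≤ (k : ℝ)⁻¹)) k
    rw [← Nat.cast_smul_eq_nsmul ℝ, smul_smul, mul_inv_cancel₀ hk', one_smul, Matrix.mul_smul,
      trace_smul, smul_eq_mul, inv_mul_eq_div] at h
    rw [div_right_comm]
    linarith
  have hlim : Filter.Tendsto (fun k : ℕ => (sqrtM A).trace - (sqrtM S).trace + c / 2 / k)
      Filter.atTop (nhds ((sqrtM A).trace - (sqrtM S).trace)) := by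
    simpa using tendsto_const_nhds.add (tendsto_const_div_atTop_nhds_zero_nat (c / 2))
  have := ge_of_tendsto hlim (Filter.eventually_atTop.mpr ⟨1, hstep⟩)
  linarith

end sqrtM

theorem leon_gradient_stability_general {n : ℕ} (m : Fin n → ℝ)
    {S T : Matrix (Fin n) (Fin n) ℝ} (hS : S.PosDef) (hT : T.PosDef)
    (hST : (T - S).PosSemidef) {η : ℝ}
    {gS gT : Fin n → ℝ}
    (hgS : gS = η • ((sqrtM (vecMulVec m m + S))⁻¹ *ᵥ m))
    (hgT : gT = η • ((sqrtM (vecMulVec m m + T))⁻¹ *ᵥ m)) :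
    (gT - gS) ⬝ᵥ (sqrtM T *ᵥ (gT - gS)) ≤ η ^ 2 * ((sqrtM T).trace - (sqrtM S).trace) := by
  set X := vecMulVec m m
  have hX : X.PosSemidef := by simpa using posSemidef_vecMulVec_self_star m
  have hXS : (X + S).PosDef := hS.posSemidef_add hX
  set F := sqrtM (X + S)
  set G := sqrtM (X + T)
  have hFG : F ≤ G := sqrtM_le_sqrtM hXS (add_le_add_right (le_iff.mpr hST) X)
  have hTG : sqrtM T ≤ G := sqrtM_le_sqrtM hT (le_add_of_nonneg_left hX.nonneg)
  have hgap : G.trace - F.trace ≤ (sqrtM T).trace - (sqrtM S).trace := by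
    have h := trace_sqrtM_add_sub_le hS (le_iff.mpr hST) hX
    rw [add_comm T, add_comm S] at h
    linarith
  set w := G⁻¹ *ᵥ m - F⁻¹ *ᵥ m
  have hwG : w ⬝ᵥ (G *ᵥ w) ≤ G.trace - F.trace :=
    (posDef_sqrtM hXS).quadForm_inv_sub_inv_mulVec_le_trace_sub m hFG hS.posSemidef
      (sqrtM_mul_self hXS.posSemidef)
  have hwT : w ⬝ᵥ (sqrtM T *ᵥ w) ≤ w ⬝ᵥ (G *ᵥ w) := dotProduct_mulVec_le_of_le hTG w
  rw [hgS, hgT, ← smul_sub, mulVec_smul, dotProduct_smul, smul_dotProduct, smul_eq_mul,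
    smul_eq_mul, ← mul_assoc, ← sq]
  exact mul_le_mul_of_nonneg_left (by linarith) (sq_nonneg η)

theorem leon_gradient_stability {n : ℕ} (m : Fin n → ℝ)
    {S T : Matrix (Fin n) (Fin n) ℝ} (hS : S.PosDef) (hT : T.PosDef)
    (hST : (T - S).PosSemidef) {η : ℝ} (hη : 0 < η)
    {gS gT : Fin n → ℝ}
    (hgS : gS = η • ((sqrtM (vecMulVec m m + S))⁻¹ *ᵥ m))
    (hgT : gT = η • ((sqrtM (vecMulVec m m + T))⁻¹ *ᵥ m)) :
    (gT - gS) ⬝ᵥ (sqrtM T *ᵥ (gT - gS)) ≤ η ^ 2 * ((sqrtM T).trace - (sqrtM S).trace) :=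
  leon_gradient_stability_general m hS hT hST hgS hgT
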